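/- For the Leibniz algebra 𝔏₆⁰ (sole nonzero product e₂e₃ = e₂), the space of derivations has dimension 3, and for 𝔏₆¹ (products e₁e₃ = e₁, e₂e₃ = e₂) the space of derivations has dimension 4. -/
import Mathlib

/-- Multiplication of `𝔏₆⁰` on ℂ³ (basis `e₁,e₂,e₃` = indices `0,1,2`):
sole nonzero basis product `e₂e₃ = e₂`. -/
def mulL60 (x y : Fin 3 → ℂ) : Fin 3 → ℂ := ![0, x 1 * y 2, 0]

/-- Multiplication of `𝔏₆¹` on ℂ³: `e₁e₃ = e₁`, `e₂e₃ = e₂`, other basis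
products zero. -/
def mulL61 (x y : Fin 3 → ℂ) : Fin 3 → ℂ := ![x 0 * y 2, x 1 * y 2, 0]

noncomputable def DerL60 : Submodule ℂ ((Fin 3 → ℂ) →ₗ[ℂ] (Fin 3 → ℂ)) where
  carrier := {D | ∀ x y, D (mulL60 x y) = mulL60 (D x) y + mulL60 x (D y)}
  add_mem' := by
    intro D E hD hE x y
    have h1 : mulL60 (D x + E x) y = mulL60 (D x) y + mulL60 (E x) y := by
      funext i; fin_cases i <;> (simp [mulL60]; try ring)
    have h2 : mulL60 x (D y + E y) = mulL60 x (D y) + mulL60 x (E y) := by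
      funext i; fin_cases i <;> (simp [mulL60]; try ring)
    simp only [LinearMap.add_apply, hD x y, hE x y, h1, h2]
    abel
  zero_mem' := by
    intro x y
    funext i; fin_cases i <;> simp [mulL60]
  smul_mem' := by
    intro c D hD x y
    have h1 : mulL60 (c • D x) y = c • mulL60 (D x) y := by
      funext i; fin_cases i <;> (simp [mulL60]; try ring)
    have h2 : mulL60 x (c • D y) = c • mulL60 x (D y) := by
      funext i; fin_cases i <;> (simp [mulL60]; try ring)
    simp only [LinearMap.smul_apply, hD x y, h1, h2, smul_add]

noncomputable def DerL61 : Submodule ℂ ((Fin 3 → ℂ) →ₗ[ℂ] (Fin 3 → ℂ)) where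
  carrier := {D | ∀ x y, D (mulL61 x y) = mulL61 (D x) y + mulL61 x (D y)}
  add_mem' := by
    intro D E hD hE x y
    have h1 : mulL61 (D x + E x) y = mulL61 (D x) y + mulL61 (E x) y := by
      funext i; fin_cases i <;> (simp [mulL61]; try ring)
    have h2 : mulL61 x (D y + E y) = mulL61 x (D y) + mulL61 x (E y) := by
      funext i; fin_cases i <;> (simp [mulL61]; try ring)
    simp only [LinearMap.add_apply, hD x y, hE x y, h1, h2]
    abel
  zero_mem' := by
    intro x y
    funext i; fin_cases i <;> simp [mulL61]
  smul_mem' := by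
    intro c D hD x y
    have h1 : mulL61 (c • D x) y = c • mulL61 (D x) y := by
      funext i; fin_cases i <;> (simp [mulL61]; try ring)
    have h2 : mulL61 x (c • D y) = c • mulL61 x (D y) := by
      funext i; fin_cases i <;> (simp [mulL61]; try ring)
    simp only [LinearMap.smul_apply, hD x y, h1, h2, smul_add]

/-- Candidate derivation of `𝔏₆⁰` with parameters `c`. -/
def D60fun (c : Fin 3 → ℂ) : (Fin 3 → ℂ) →ₗ[ℂ] (Fin 3 → ℂ) where
  toFun x := ![c 0 * x 0 + c 1 * x 2, c 2 * x 1, 0]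
  map_add' x y := by funext i; fin_cases i <;> simp <;> ring
  map_smul' r x := by funext i; fin_cases i <;> (simp; try ring)

/-- Candidate derivation of `𝔏₆¹` with parameters `c`. -/
def D61fun (c : Fin 4 → ℂ) : (Fin 3 → ℂ) →ₗ[ℂ] (Fin 3 → ℂ) where
  toFun x := ![c 0 * x 0 + c 1 * x 1, c 2 * x 0 + c 3 * x 1, 0]
  map_add' x y := by funext i; fin_cases i <;> simp <;> ring
  map_smul' r x := by funext i; fin_cases i <;> (simp; try ring)

lemma D60fun_mem (c : Fin 3 → ℂ) : D60fun c ∈ DerL60 := by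
  intro x y
  funext i; fin_cases i <;> (simp [D60fun, mulL60]; try ring)

lemma D61fun_mem (c : Fin 4 → ℂ) : D61fun c ∈ DerL61 := by
  intro x y
  funext i; fin_cases i <;> (simp [D61fun, mulL61]; try ring)

noncomputable def toDer60 : (Fin 3 → ℂ) →ₗ[ℂ] DerL60 where
  toFun c := ⟨D60fun c, D60fun_mem c⟩
  map_add' c d := by
    apply Subtype.ext; apply LinearMap.ext; intro x
    funext i; fin_cases i <;> (simp [D60fun]; try ring)
  map_smul' r c := by
    apply Subtype.ext; apply LinearMap.ext; intro x
    funext i; fin_cases i <;> (simp [D60fun]; try ring)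

noncomputable def toDer61 : (Fin 4 → ℂ) →ₗ[ℂ] DerL61 where
  toFun c := ⟨D61fun c, D61fun_mem c⟩
  map_add' c d := by
    apply Subtype.ext; apply LinearMap.ext; intro x
    funext i; fin_cases i <;> (simp [D61fun]; try ring)
  map_smul' r c := by
    apply Subtype.ext; apply LinearMap.ext; intro x
    funext i; fin_cases i <;> (simp [D61fun]; try ring)

lemma toDer60_bij : Function.Bijective toDer60 := by
  constructor
  · intro c d h
    have h' : D60fun c = D60fun d := congrArg Subtype.val h
    funext j
    fin_cases j
    · have := congrFun (DFunLike.congr_fun h' ![1, 0, 0]) 0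
      simpa [D60fun] using this
    · have := congrFun (DFunLike.congr_fun h' ![0, 0, 1]) 0
      simpa [D60fun] using this
    · have := congrFun (DFunLike.congr_fun h' ![0, 1, 0]) 1
      simpa [D60fun] using this
  · rintro ⟨D, hD⟩
    refine ⟨![D ![1, 0, 0] 0, D ![0, 0, 1] 0, D ![0, 1, 0] 1], ?_⟩
    have hz : ∀ i, D ![0, 0, 0] i = 0 := by
      have h0 : (![0, 0, 0] : Fin 3 → ℂ) = 0 := by funext i; fin_cases i <;> simp
      intro i; rw [h0, map_zero]; rfl
    have h01 : D ![0, 1, 0] 0 = 0 := by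
      have h := congrFun (hD ![0, 1, 0] ![0, 0, 1]) 0
      simp [mulL60, hz] at h
      first | exact h | exact h.symm | linear_combination h | linear_combination -h
    have h21 : D ![0, 1, 0] 2 = 0 := by
      have h := congrFun (hD ![0, 1, 0] ![0, 0, 1]) 2
      simp [mulL60, hz] at h
      first | exact h | exact h.symm | linear_combination h | linear_combination -h
    have h22 : D ![0, 0, 1] 2 = 0 := by
      have h := congrFun (hD ![0, 1, 0] ![0, 0, 1]) 1
      simp [mulL60] at h
      linear_combination h
    have h10 : D ![1, 0, 0] 1 = 0 := by
      have h := congrFun (hD ![1, 0, 0] ![0, 0, 1]) 1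
      simp [mulL60, hz] at h
      first | exact h | exact h.symm | linear_combination h | linear_combination -h
    have h12 : D ![0, 0, 1] 1 = 0 := by
      have h := congrFun (hD ![0, 0, 1] ![0, 0, 1]) 1
      simp [mulL60, hz] at h
      first | exact h | exact h.symm | linear_combination h | linear_combination -h
    have h20 : D ![1, 0, 0] 2 = 0 := by
      have h := congrFun (hD ![0, 1, 0] ![1, 0, 0]) 1
      simp [mulL60, hz] at h
      first | exact h | exact h.symm | linear_combination h | linear_combination -h
    apply Subtype.ext; apply LinearMap.ext; intro x
    have hx : x = x 0 • ![1, 0, 0] + x 1 • ![0, 1, 0] + x 2 • ![0, 0, 1] := by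
      funext i; fin_cases i <;> simp
    have hDx : D x = x 0 • D ![1, 0, 0] + x 1 • D ![0, 1, 0] + x 2 • D ![0, 0, 1] := by
      conv_lhs => rw [hx]
      simp only [map_add, map_smul]
    funext i
    fin_cases i <;> simp [toDer60, D60fun, hDx, h01, h21, h22, h10, h12, h20] <;> ring

lemma toDer61_bij : Function.Bijective toDer61 := by
  constructor
  · intro c d h
    have h' : D61fun c = D61fun d := congrArg Subtype.val h
    funext j
    fin_cases j
    · have := congrFun (DFunLike.congr_fun h' ![1, 0, 0]) 0
      simpa [D61fun] using this
    · have := congrFun (DFunLike.congr_fun h' ![0, 1, 0]) 0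
      simpa [D61fun] using this
    · have := congrFun (DFunLike.congr_fun h' ![1, 0, 0]) 1
      simpa [D61fun] using this
    · have := congrFun (DFunLike.congr_fun h' ![0, 1, 0]) 1
      simpa [D61fun] using this
  · rintro ⟨D, hD⟩
    refine ⟨![D ![1, 0, 0] 0, D ![0, 1, 0] 0, D ![1, 0, 0] 1, D ![0, 1, 0] 1], ?_⟩
    have hz : ∀ i, D ![0, 0, 0] i = 0 := by
      have h0 : (![0, 0, 0] : Fin 3 → ℂ) = 0 := by funext i; fin_cases i <;> simp
      intro i; rw [h0, map_zero]; rfl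
    have h20 : D ![1, 0, 0] 2 = 0 := by
      have h := congrFun (hD ![1, 0, 0] ![0, 0, 1]) 2
      simp [mulL61, hz] at h
      first | exact h | exact h.symm | linear_combination h | linear_combination -h
    have h21 : D ![0, 1, 0] 2 = 0 := by
      have h := congrFun (hD ![0, 1, 0] ![0, 0, 1]) 2
      simp [mulL61, hz] at h
      first | exact h | exact h.symm | linear_combination h | linear_combination -h
    have h02 : D ![0, 0, 1] 0 = 0 := by
      have h := congrFun (hD ![0, 0, 1] ![0, 0, 1]) 0
      simp [mulL61, hz] at h
      first | exact h | exact h.symm | linear_combination h | linear_combination -h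
    have h12 : D ![0, 0, 1] 1 = 0 := by
      have h := congrFun (hD ![0, 0, 1] ![0, 0, 1]) 1
      simp [mulL61, hz] at h
      first | exact h | exact h.symm | linear_combination h | linear_combination -h
    have h22 : D ![0, 0, 1] 2 = 0 := by
      have h := congrFun (hD ![1, 0, 0] ![0, 0, 1]) 0
      simp [mulL61] at h
      linear_combination h
    apply Subtype.ext; apply LinearMap.ext; intro x
    have hx : x = x 0 • ![1, 0, 0] + x 1 • ![0, 1, 0] + x 2 • ![0, 0, 1] := by
      funext i; fin_cases i <;> simp
    have hDx : D x = x 0 • D ![1, 0, 0] + x 1 • D ![0, 1, 0] + x 2 • D ![0, 0, 1] := by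
      conv_lhs => rw [hx]
      simp only [map_add, map_smul]
    funext i
    fin_cases i <;> simp [toDer61, D61fun, hDx, h20, h21, h02, h12, h22] <;> ring

/-- The space of derivations of `𝔏₆⁰` has dimension 3 and the space of
derivations of `𝔏₆¹` has dimension 4. -/
theorem stmt_15 : Module.finrank ℂ DerL60 = 3 ∧ Module.finrank ℂ DerL61 = 4 := by
  constructor
  · rw [← LinearEquiv.finrank_eq (LinearEquiv.ofBijective toDer60 toDer60_bij)]
    simp
  · rw [← LinearEquiv.finrank_eq (LinearEquiv.ofBijective toDer61 toDer61_bij)]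
    simp
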